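/- Let I be the cut ideal of the complete graph K_i, with minimal monomial generating set of cardinality r. Then the set of ideals {I_k : 1 ≤ k ≤ r} appearing in the lcm-filtration of I equals the set of ideals {Ī_k : k ≥ 1} appearing in the stepwise lcm-filtration of I. -/

import Mathlib

open MvPolynomial Finset

noncomputable section
open scoped Classical

variable {σ : Type*}

/-- The ideal generated by the monomials `x^μ`, `μ ∈ S`. -/
def monIdeal (K : Type*) [Field K] {σ : Type*} (S : Finset (σ →₀ ℕ)) :
    Ideal (MvPolynomial σ K) :=
  Ideal.span ((fun μ => (monomial μ 1 : MvPolynomial σ K)) '' ↑S)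

/-- The minimal elements of a finite set of exponent vectors; these are the exponents of
the minimal monomial generating set of the monomial ideal generated by `S`. -/
def minGen {σ : Type*} (S : Finset (σ →₀ ℕ)) : Finset (σ →₀ ℕ) :=
  S.filter fun μ => ∀ ν ∈ S, ν ≤ μ → ν = μ

/-- Exponents of lcm's of pairs of distinct monomials with exponents in `S`
(the lcm of `x^μ` and `x^ν` is `x^(μ ⊔ ν)`). -/
def pairLcms {σ : Type*} (S : Finset (σ →₀ ℕ)) : Finset (σ →₀ ℕ) :=
  ((S ×ˢ S).filter fun p => p.1 ≠ p.2).image fun p => p.1 ⊔ p.2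

/-- Generating exponents of the stepwise lcm-filtration: `stepGens S k` generates `Ī_{k+1}`,
where `Ī_1` is generated by `S` and `Ī_{k+1}` is generated by the lcm's of pairs of distinct
elements of the minimal monomial generating set of `Ī_k`. -/
def stepGens {σ : Type*} (S : Finset (σ →₀ ℕ)) : ℕ → Finset (σ →₀ ℕ)
  | 0 => S
  | k + 1 => pairLcms (minGen (stepGens S k))

/-- `Ī_k`, the `k`-th step (`k ≥ 1`) of the stepwise lcm-filtration of the monomial ideal
generated by the monomials with exponents in `S`. -/
def stepIdeal (K : Type*) [Field K] {σ : Type*} (S : Finset (σ →₀ ℕ)) (k : ℕ) :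
    Ideal (MvPolynomial σ K) :=
  monIdeal K (stepGens S (k - 1))

/-- Exponents of the lcm's of all `k`-element subsets of `S`. -/
def lcmFoldGens {σ : Type*} (S : Finset (σ →₀ ℕ)) (k : ℕ) : Finset (σ →₀ ℕ) :=
  (S.powersetCard k).image fun T => T.sup id

/-- The `k`-fold lcm-ideal `I_k` of the monomial ideal whose minimal monomial generating set
has exponents `S`. -/
def lcmFoldIdeal (K : Type*) [Field K] {σ : Type*} (S : Finset (σ →₀ ℕ)) (k : ℕ) :
    Ideal (MvPolynomial σ K) :=
  monIdeal K (lcmFoldGens S k)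

/-- The edges of the complete graph `K_i` on vertex set `Fin i`. -/
abbrev Edge (i : ℕ) := {e : Sym2 (Fin i) // ¬ e.IsDiag}

/-- An edge `e` of `K_i` crosses the partition `P` if no part of `P` contains both of its
endpoints. -/
def crosses {i : ℕ} (P : Finpartition (univ : Finset (Fin i))) (e : Sym2 (Fin i)) : Prop :=
  ¬ ∃ t ∈ P.parts, ∀ v ∈ e, v ∈ t

/-- `E(C)`: the set of edges of `K_i` whose endpoints lie in different parts of `P`. -/
def cutEdges {i : ℕ} (P : Finpartition (univ : Finset (Fin i))) : Finset (Edge i) :=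
  univ.filter fun e => crosses P e.val

/-- The exponent vector of the cut monomial `m_C = ∏_{e ∈ E(C)} x_e` of the partition `P`. -/
def cutExp {i : ℕ} (P : Finpartition (univ : Finset (Fin i))) : Edge i →₀ ℕ :=
  ∑ e ∈ cutEdges P, Finsupp.single e 1

/-- The cut monomial `m_C = ∏_{e ∈ E(C)} x_e` of the partition `P`, with respect to `K_i`. -/
def cutMon (K : Type*) [Field K] {i : ℕ} (P : Finpartition (univ : Finset (Fin i))) :
    MvPolynomial (Edge i) K := monomial (cutExp P) 1

instance {i : ℕ} : Finite (Finpartition (univ : Finset (Fin i))) :=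
  Finite.of_injective Finpartition.parts fun a b h => Finpartition.ext (by simp [h])

/-- The exponents of the cut monomials of all `j`-partitions of the vertex set of `K_i`. -/
def cutGens (i j : ℕ) : Finset (Edge i →₀ ℕ) :=
  ((Set.toFinite {P : Finpartition (univ : Finset (Fin i)) | P.parts.card = j}).image
    cutExp).toFinset

/-- `P_{i,j}`: the ideal generated by the cut monomials of all `j`-partitions of the vertex
set of `K_i` (for the complete graph every `j`-partition is a `j`-cut). -/
def Pij (K : Type*) [Field K] (i j : ℕ) : Ideal (MvPolynomial (Edge i) K) :=
  monIdeal K (cutGens i j)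

section auxEind
variable {σ : Type*}

/-- indicator exponent vector of a finite set -/
def eind {α : Type*} (s : Finset α) : α →₀ ℕ := ∑ e ∈ s, Finsupp.single e 1

lemma eind_apply {α : Type*} (s : Finset α) (a : α) :
    eind s a = if a ∈ s then 1 else 0 := by
  classical
  simp [eind, Finsupp.finset_sum_apply, Finsupp.single_apply, Finset.sum_ite_eq' s a (fun _ => 1)]

lemma eind_le_iff {α : Type*} {s t : Finset α} : eind s ≤ eind t ↔ s ⊆ t := by
  classical
  constructor
  · intro h a ha
    have := (Finsupp.le_def.mp h) a
    simp only [eind_apply, ha, if_true] at this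
    by_contra hb
    simp [hb] at this
  · intro h
    rw [Finsupp.le_def]
    intro a
    simp only [eind_apply]
    by_cases ha : a ∈ s
    · simp [ha, h ha]
    · simp [ha]

lemma eind_inj {α : Type*} {s t : Finset α} (h : eind s = eind t) : s = t :=
  le_antisymm (eind_le_iff.mp h.le) (eind_le_iff.mp h.ge)

lemma eind_union {α : Type*} [DecidableEq α] (s t : Finset α) : eind (s ∪ t) = eind s ⊔ eind t := by
  classical
  ext a
  rw [Finsupp.sup_apply]
  simp only [eind_apply, Finset.mem_union]
  by_cases hs : a ∈ s <;> by_cases ht : a ∈ t <;> simp [hs, ht]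

lemma eind_empty {α : Type*} : eind (∅ : Finset α) = 0 := by simp [eind]


lemma monomial_mem_monIdeal {K : Type*} [Field K] {S : Finset (σ →₀ ℕ)} {μ : σ →₀ ℕ} :
    (monomial μ (1 : K)) ∈ monIdeal K S ↔ ∃ ν ∈ S, ν ≤ μ := by
  constructor
  · intro h
    rw [monIdeal, Ideal.span, Submodule.mem_span_set'] at h
    obtain ⟨n, f, g, hfg⟩ := h
    by_contra hno
    push_neg at hno
    have hc := congrArg (coeff μ) hfg
    rw [coeff_monomial, if_pos rfl] at hc
    rw [MvPolynomial.coeff_sum] at hc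
    have : ∀ j : Fin n, coeff μ (f j • (g j : MvPolynomial σ K)) = 0 := by
      intro j
      obtain ⟨gj, hgj⟩ := g j
      obtain ⟨ν, hν, rfl⟩ := hgj
      simp only [smul_eq_mul]
      rw [coeff_mul_monomial']
      rw [if_neg]
      exact fun hle => hno ν hν hle
    rw [Finset.sum_congr rfl (fun j _ => this j), Finset.sum_const_zero] at hc
    exact one_ne_zero hc.symm
  · rintro ⟨ν, hν, hle⟩
    have : (monomial μ (1 : K)) = monomial (μ - ν) 1 * monomial ν 1 := by
      rw [monomial_mul, one_mul, tsub_add_cancel_of_le hle]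
    rw [this]
    exact Ideal.mul_mem_left _ _ (Ideal.subset_span ⟨ν, hν, rfl⟩)

lemma monIdeal_le_iff {K : Type*} [Field K] {S T : Finset (σ →₀ ℕ)} :
    monIdeal K S ≤ monIdeal K T ↔ ∀ μ ∈ S, ∃ ν ∈ T, ν ≤ μ := by
  constructor
  · intro h μ hμ
    have : (monomial μ (1 : K)) ∈ monIdeal K T :=
      h (Ideal.subset_span ⟨μ, hμ, rfl⟩)
    exact monomial_mem_monIdeal.mp this
  · intro h
    rw [monIdeal, Ideal.span_le]
    rintro p ⟨μ, hμ, rfl⟩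
    obtain ⟨ν, hν, hle⟩ := h μ hμ
    exact monomial_mem_monIdeal.mpr ⟨ν, hν, hle⟩

lemma monIdeal_eq_iff {K : Type*} [Field K] {S T : Finset (σ →₀ ℕ)} :
    monIdeal K S = monIdeal K T ↔
      (∀ μ ∈ S, ∃ ν ∈ T, ν ≤ μ) ∧ (∀ μ ∈ T, ∃ ν ∈ S, ν ≤ μ) := by
  rw [le_antisymm_iff, monIdeal_le_iff, monIdeal_le_iff]


end auxEind

section auxPart
variable {i : ℕ}

/-- same part relation -/
def spart (P : Finpartition (univ : Finset (Fin i))) (v w : Fin i) : Prop :=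
  ∃ t ∈ P.parts, v ∈ t ∧ w ∈ t

lemma spart_refl (P : Finpartition (univ : Finset (Fin i))) (v : Fin i) : spart P v v := by
  obtain ⟨t, ht, hv⟩ := P.exists_mem (mem_univ v)
  exact ⟨t, ht, hv, hv⟩

lemma spart_symm {P : Finpartition (univ : Finset (Fin i))} {v w : Fin i}
    (h : spart P v w) : spart P w v := by
  obtain ⟨t, ht, hv, hw⟩ := h
  exact ⟨t, ht, hw, hv⟩

lemma crosses_iff {P : Finpartition (univ : Finset (Fin i))} {v w : Fin i} :
    crosses P s(v, w) ↔ ¬ spart P v w := by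
  unfold crosses spart
  constructor
  · intro h ⟨t, ht, hv, hw⟩
    exact h ⟨t, ht, fun x hx => by rcases Sym2.mem_iff.mp hx with rfl | rfl <;> assumption⟩
  · intro h ⟨t, ht, hall⟩
    exact h ⟨t, ht, hall v (Sym2.mem_mk_left v w), hall w (Sym2.mem_mk_right v w)⟩

lemma mem_cutEdges {P : Finpartition (univ : Finset (Fin i))} {e : Edge i} :
    e ∈ cutEdges P ↔ crosses P e.val := by
  simp [cutEdges]

lemma mem_cutEdges' {P : Finpartition (univ : Finset (Fin i))} {v w : Fin i}
    (h : ¬ (s(v,w) : Sym2 (Fin i)).IsDiag) :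
    (⟨s(v,w), h⟩ : Edge i) ∈ cutEdges P ↔ ¬ spart P v w := by
  rw [mem_cutEdges]; exact crosses_iff

lemma cutEdges_subset_iff {P Q : Finpartition (univ : Finset (Fin i))} :
    cutEdges Q ⊆ cutEdges P ↔ ∀ v w, spart P v w → spart Q v w := by
  constructor
  · intro h v w hP
    by_cases hvw : v = w
    · subst hvw; exact spart_refl Q v
    · by_contra hQ
      have hd : ¬ (s(v,w) : Sym2 (Fin i)).IsDiag := by
        rw [Sym2.isDiag_iff_proj_eq]; exact hvw
      have : (⟨s(v,w), hd⟩ : Edge i) ∈ cutEdges Q := (mem_cutEdges' hd).mpr hQ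
      have := h this
      rw [mem_cutEdges' hd] at this
      exact this hP
  · intro h e he
    obtain ⟨ev, hev⟩ := e
    induction ev using Sym2.inductionOn with
    | hf v w =>
      rw [mem_cutEdges' hev] at he ⊢
      exact fun hP => he (h v w hP)

lemma le_iff_spart {P Q : Finpartition (univ : Finset (Fin i))} :
    P ≤ Q ↔ ∀ v w, spart P v w → spart Q v w := by
  constructor
  · rintro h v w ⟨t, ht, hv, hw⟩
    obtain ⟨c, hc, htc⟩ := h ht
    exact ⟨c, hc, htc hv, htc hw⟩
  · intro h b hb
    obtain ⟨v, hv⟩ := P.nonempty_of_mem_parts hb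
    obtain ⟨c, hc, hvc, _⟩ := h v v ⟨b, hb, hv, hv⟩
    refine ⟨c, hc, fun w hw => ?_⟩
    obtain ⟨c', hc', hvc', hwc'⟩ := h v w ⟨b, hb, hv, hw⟩
    rwa [Q.eq_of_mem_parts hc' hc hvc' hvc] at hwc'

lemma cutEdges_subset_iff_le {P Q : Finpartition (univ : Finset (Fin i))} :
    cutEdges Q ⊆ cutEdges P ↔ P ≤ Q := by
  rw [cutEdges_subset_iff, le_iff_spart]

lemma cutEdges_inj {P Q : Finpartition (univ : Finset (Fin i))}
    (h : cutEdges P = cutEdges Q) : P = Q :=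
  le_antisymm (cutEdges_subset_iff_le.mp h.ge) (cutEdges_subset_iff_le.mp h.le)

lemma spart_inf {P Q : Finpartition (univ : Finset (Fin i))} {v w : Fin i} :
    spart (P ⊓ Q) v w ↔ spart P v w ∧ spart Q v w := by
  constructor
  · intro h
    exact ⟨le_iff_spart.mp inf_le_left v w h, le_iff_spart.mp inf_le_right v w h⟩
  · rintro ⟨⟨t, ht, hvt, hwt⟩, ⟨u, hu, hvu, hwu⟩⟩
    refine ⟨t ∩ u, ?_, Finset.mem_inter.mpr ⟨hvt, hvu⟩, Finset.mem_inter.mpr ⟨hwt, hwu⟩⟩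
    rw [Finpartition.parts_inf]
    refine mem_erase_of_ne_of_mem ?_ (mem_image.mpr ⟨(t, u), mem_product.mpr ⟨ht, hu⟩, rfl⟩)
    rw [bot_eq_empty]
    exact ne_empty_of_mem (Finset.mem_inter.mpr ⟨hvt, hvu⟩)

lemma cutEdges_inf {P Q : Finpartition (univ : Finset (Fin i))} :
    cutEdges (P ⊓ Q) = cutEdges P ∪ cutEdges Q := by
  ext e
  obtain ⟨ev, hev⟩ := e
  induction ev using Sym2.inductionOn with
  | hf v w =>
    rw [Finset.mem_union, mem_cutEdges' hev, mem_cutEdges' hev, mem_cutEdges' hev, spart_inf]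
    tauto

/-- If `P ≤ Q` and they have the same number of parts then they are equal. -/
lemma finpartition_eq_of_le_of_card {P Q : Finpartition (univ : Finset (Fin i))}
    (hle : P ≤ Q) (hcard : Q.parts.card = P.parts.card) : P = Q := by
  classical
  have hch : ∀ b ∈ P.parts, ∃ c ∈ Q.parts, b ≤ c := hle
  choose f hf1 hf2 using hch
  -- rewrite as a total function
  set g : Finset (Fin i) → Finset (Fin i) := fun b => if hb : b ∈ P.parts then f b hb else ∅
    with hg
  have hg1 : ∀ b ∈ P.parts, g b ∈ Q.parts := fun b hb => by simp [hg, hb, hf1]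
  have hg2 : ∀ b ∈ P.parts, b ⊆ g b := fun b hb => by simp only [hg, dif_pos hb]; exact hf2 b hb
  have himg : Q.parts ⊆ P.parts.image g := by
    intro c hc
    obtain ⟨b, hb, hbc⟩ := Finpartition.exists_le_of_le hle hc
    have : g b = c := by
      rcases eq_or_ne (g b) c with h | h
      · exact h
      · exfalso
        have hd := Q.disjoint (hg1 b hb) hc h
        obtain ⟨x, hx⟩ := P.nonempty_of_mem_parts hb
        exact (Finset.disjoint_left.mp hd (hg2 b hb hx)) (hbc hx)
    exact mem_image.mpr ⟨b, hb, this⟩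
  have himgcard : P.parts.image g = Q.parts := by
    exact (Finset.eq_of_subset_of_card_le himg (le_trans Finset.card_image_le hcard.ge)).symm
  have hinj : Set.InjOn g P.parts := by
    apply Finset.injOn_of_card_image_eq
    rw [himgcard, hcard]
  -- sums of cards
  have hsum : ∑ b ∈ P.parts, b.card = ∑ b ∈ P.parts, (g b).card := by
    rw [P.sum_card_parts, ← Q.sum_card_parts, ← himgcard, Finset.sum_image]
    intro x hx y hy hxy
    exact hinj hx hy hxy
  have heqcard : ∀ b ∈ P.parts, b.card = (g b).card := by
    exact (Finset.sum_eq_sum_iff_of_le (fun b hb => Finset.card_le_card (hg2 b hb))).mp hsum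
  have heq : ∀ b ∈ P.parts, b = g b := fun b hb =>
    Finset.eq_of_subset_of_card_le (hg2 b hb) (le_of_eq (heqcard b hb).symm)
  apply Finpartition.ext
  have : P.parts ⊆ Q.parts := by
    intro b hb
    rw [heq b hb]
    exact hg1 b hb
  exact Finset.eq_of_subset_of_card_le this (le_of_eq hcard)

end auxPart

section auxMerge
variable {β : Type*} [DecidableEq β] {s : Finset β}

/-- Merge two parts of a finpartition of a finset. -/
def mergeP (R : Finpartition s) {a b : Finset β} (ha : a ∈ R.parts) (hb : b ∈ R.parts)
    (hab : a ≠ b) : Finpartition s where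
  parts := insert (a ∪ b) ((R.parts.erase a).erase b)
  supIndep := by
    rw [Finset.supIndep_iff_pairwiseDisjoint]
    intro x hx y hy hxy
    simp only [coe_insert, Set.mem_insert_iff, mem_coe, mem_erase] at hx hy
    have hdisj : ∀ t ∈ R.parts, t ≠ a → t ≠ b → Disjoint (a ∪ b) t := by
      intro t ht hta htb
      rw [Finset.disjoint_union_left]
      exact ⟨R.disjoint ha ht (Ne.symm hta), R.disjoint hb ht (Ne.symm htb)⟩
    rcases hx with rfl | ⟨hxb, hxa, hxm⟩
    · rcases hy with rfl | ⟨hyb, hya, hym⟩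
      · exact absurd rfl hxy
      · exact hdisj y hym hya hyb
    · rcases hy with rfl | ⟨hyb, hya, hym⟩
      · exact (hdisj x hxm hxa hxb).symm
      · exact R.disjoint hxm hym hxy
  sup_parts := by
    have h1 : insert b ((R.parts.erase a).erase b) = R.parts.erase a :=
      Finset.insert_erase (Finset.mem_erase.mpr ⟨Ne.symm hab, hb⟩)
    have h2 : insert a (R.parts.erase a) = R.parts := Finset.insert_erase ha
    rw [Finset.sup_insert]
    show (a ⊔ b) ⊔ _ = s
    rw [sup_assoc]
    have hb' : b ⊔ ((R.parts.erase a).erase b).sup id = (R.parts.erase a).sup id := by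
      conv_rhs => rw [← h1, Finset.sup_insert]
      rfl
    have ha' : a ⊔ (R.parts.erase a).sup id = R.parts.sup id := by
      conv_rhs => rw [← h2, Finset.sup_insert]
      rfl
    rw [hb', ha', R.sup_parts]
  bot_notMem := by
    rw [Finset.mem_insert]
    rintro (h | h)
    · rw [bot_eq_empty, eq_comm, Finset.union_eq_empty] at h
      exact absurd h.1 (Finset.nonempty_iff_ne_empty.mp (R.nonempty_of_mem_parts ha))
    · exact R.bot_notMem (Finset.mem_of_mem_erase (Finset.mem_of_mem_erase h))

lemma union_not_mem_erase (R : Finpartition s) {a b : Finset β} (ha : a ∈ R.parts)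
    (hb : b ∈ R.parts) (hab : a ≠ b) : a ∪ b ∉ R.parts := by
  intro hm
  have hne : a ∪ b ≠ a := by
    intro h
    have : b ⊆ a := by rw [← h]; exact Finset.subset_union_right
    obtain ⟨x, hx⟩ := R.nonempty_of_mem_parts hb
    exact Finset.disjoint_left.mp (R.disjoint ha hb hab) (this hx) hx
  have := R.disjoint ha hm (Ne.symm hne)
  obtain ⟨x, hx⟩ := R.nonempty_of_mem_parts ha
  exact Finset.disjoint_left.mp this hx (Finset.subset_union_left hx)

lemma mergeP_parts_card (R : Finpartition s) {a b : Finset β} (ha : a ∈ R.parts)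
    (hb : b ∈ R.parts) (hab : a ≠ b) :
    (mergeP R ha hb hab).parts.card = R.parts.card - 1 := by
  have hnm : a ∪ b ∉ (R.parts.erase a).erase b := by
    intro h
    exact union_not_mem_erase R ha hb hab (Finset.mem_of_mem_erase (Finset.mem_of_mem_erase h))
  have h2 : 2 ≤ R.parts.card := Finset.one_lt_card.mpr ⟨a, ha, b, hb, hab⟩
  show (insert (a ∪ b) ((R.parts.erase a).erase b)).card = R.parts.card - 1
  rw [Finset.card_insert_of_notMem hnm, Finset.card_erase_of_mem
    (Finset.mem_erase.mpr ⟨Ne.symm hab, hb⟩), Finset.card_erase_of_mem ha]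
  omega

lemma le_mergeP (R : Finpartition s) {a b : Finset β} (ha : a ∈ R.parts) (hb : b ∈ R.parts)
    (hab : a ≠ b) : R ≤ mergeP R ha hb hab := by
  intro t ht
  by_cases hta : t = a
  · exact ⟨a ∪ b, Finset.mem_insert_self _ _, hta ▸ Finset.subset_union_left⟩
  by_cases htb : t = b
  · exact ⟨a ∪ b, Finset.mem_insert_self _ _, htb ▸ Finset.subset_union_right⟩
  · exact ⟨t, Finset.mem_insert_of_mem (Finset.mem_erase.mpr ⟨htb,
      Finset.mem_erase.mpr ⟨hta, ht⟩⟩), le_refl t⟩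

lemma mergeP_parts (R : Finpartition s) {a b : Finset β} (ha : a ∈ R.parts) (hb : b ∈ R.parts)
    (hab : a ≠ b) :
    (mergeP R ha hb hab).parts = insert (a ∪ b) ((R.parts.erase a).erase b) := rfl

/-- any finpartition can be coarsened to any number of parts `1 ≤ m ≤ #parts`. -/
lemma exists_coarsening_card (R : Finpartition s) (m : ℕ) (h1 : 1 ≤ m)
    (hm : m ≤ R.parts.card) : ∃ Q, R ≤ Q ∧ Q.parts.card = m := by
  obtain ⟨n, hn⟩ : ∃ n, R.parts.card = n := ⟨_, rfl⟩
  induction n using Nat.strong_induction_on generalizing R with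
  | _ n ih =>
    rcases eq_or_lt_of_le hm with heq | hlt
    · exact ⟨R, le_refl R, heq.symm⟩
    · have h2 : 2 ≤ R.parts.card := by omega
      obtain ⟨a, ha, b, hb, hab⟩ := Finset.one_lt_card.mp h2
      set Q' := mergeP R ha hb hab
      have hcard : Q'.parts.card = R.parts.card - 1 := mergeP_parts_card R ha hb hab
      obtain ⟨Q, hQ1, hQ2⟩ := ih (n - 1) (by omega) Q' (by omega) (by omega)
      exact ⟨Q, le_trans (le_mergeP R ha hb hab) hQ1, hQ2⟩

-- ===== part 3c : bipartitions and counting =====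
section bip
variable {i : ℕ}

/-- The bipartition `{univ \ B, B}`. -/
def bipartOf (B : Finset (Fin i)) (h1 : B.Nonempty) (h2 : B ≠ univ) :
    Finpartition (univ : Finset (Fin i)) where
  parts := {univ \ B, B}
  supIndep := by
    rw [Finset.supIndep_iff_pairwiseDisjoint]
    intro x hx y hy hxy
    simp only [coe_insert, Set.mem_insert_iff, coe_singleton, Set.mem_singleton_iff] at hx hy
    have hd : Disjoint (univ \ B) B := Finset.sdiff_disjoint
    show Disjoint x y
    rcases hx with h | h <;> rcases hy with h' | h'
    · exact absurd (h.trans h'.symm) hxy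
    · rw [h, h']; exact hd
    · rw [h, h']; exact hd.symm
    · exact absurd (h.trans h'.symm) hxy
  sup_parts := by
    rw [Finset.sup_insert, Finset.sup_singleton]
    show (univ \ B) ⊔ B = univ
    rw [sup_eq_union, Finset.sdiff_union_of_subset (Finset.subset_univ B)]
  bot_notMem := by
    rw [bot_eq_empty, Finset.mem_insert, Finset.mem_singleton]
    rintro (h | h)
    · rw [eq_comm, Finset.sdiff_eq_empty_iff_subset] at h
      exact h2 (le_antisymm (Finset.subset_univ B) h)
    · exact absurd h.symm (Finset.nonempty_iff_ne_empty.mp h1)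

lemma bipartOf_parts (B : Finset (Fin i)) (h1 : B.Nonempty) (h2 : B ≠ univ) :
    (bipartOf B h1 h2).parts = {univ \ B, B} := rfl

lemma bipartOf_card (B : Finset (Fin i)) (h1 : B.Nonempty) (h2 : B ≠ univ) :
    (bipartOf B h1 h2).parts.card = 2 := by
  rw [bipartOf_parts, Finset.card_insert_of_notMem, Finset.card_singleton]
  rw [Finset.mem_singleton]
  intro h
  obtain ⟨x, hx⟩ := h1
  have : x ∈ univ \ B := by rw [h]; exact hx
  exact (Finset.mem_sdiff.mp this).2 hx

/-- parts of a 2-part coarsening of `P` -/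
lemma two_parts_structure (Q : Finpartition (univ : Finset (Fin i)))
    (h2 : Q.parts.card = 2) {A : Finset (Fin i)} (hA : A ∈ Q.parts) :
    ∃ B, B ∈ Q.parts ∧ B ≠ A ∧ Q.parts = {A, B} ∧ A ∪ B = univ ∧ Disjoint A B := by
  have : 1 < Q.parts.card := by omega
  obtain ⟨x, hx, y, hy, hxy⟩ := Finset.one_lt_card.mp this
  have hB : ∃ B ∈ Q.parts, B ≠ A := by
    rcases eq_or_ne x A with rfl | h
    · exact ⟨y, hy, fun h => hxy h.symm⟩
    · exact ⟨x, hx, h⟩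
  obtain ⟨B, hBmem, hBA⟩ := hB
  have hsub : {A, B} ⊆ Q.parts := by
    intro t ht
    rcases Finset.mem_insert.mp ht with rfl | ht
    · exact hA
    · rwa [Finset.mem_singleton.mp ht]
  have hpair : ({A, B} : Finset (Finset (Fin i))).card = 2 := by
    rw [Finset.card_insert_of_notMem (by simpa using hBA.symm), Finset.card_singleton]
  have hparts : Q.parts = {A, B} :=
    (Finset.eq_of_subset_of_card_le hsub (by omega)).symm
  refine ⟨B, hBmem, hBA, hparts, ?_, Q.disjoint hA hBmem (Ne.symm hBA)⟩
  have := Q.sup_parts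
  rw [hparts, Finset.sup_insert, Finset.sup_singleton] at this
  exact this

/-- The number of 2-part coarsenings of a partition `P` of `Fin i`, `i > 0`. -/
lemma card_bipartition_coarsenings (hi : 0 < i) (P : Finpartition (univ : Finset (Fin i))) :
    ((univ : Finset (Finpartition (univ : Finset (Fin i)))).filter
        fun Q => P ≤ Q ∧ Q.parts.card = 2).card = 2 ^ (P.parts.card - 1) - 1 := by
  classical
  set v0 : Fin i := ⟨0, hi⟩
  set t0 : Finset (Fin i) := P.part v0 with ht0
  have ht0mem : t0 ∈ P.parts := P.part_mem.2 (mem_univ v0)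
  have hv0t0 : v0 ∈ t0 := P.mem_part (mem_univ v0)
  have hTcard : (((P.parts.erase t0).powerset).erase ∅).card = 2 ^ (P.parts.card - 1) - 1 := by
    rw [Finset.card_erase_of_mem (Finset.empty_mem_powerset _), Finset.card_powerset,
      Finset.card_erase_of_mem ht0mem]
  rw [← hTcard]
  -- the bijection
  refine Finset.card_bij' (fun Q _ => P.parts.filter fun t => ¬ t ⊆ Q.part v0)
    (fun S hS => ?_) ?_ ?_ ?_ ?_
  -- ψ, defined with the needed facts inline
  · -- construct the bipartition from S
    exact if h : (S.sup id).Nonempty ∧ S.sup id ≠ univ then bipartOf (S.sup id) h.1 h.2 else ⊤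
  · -- φ lands in T
    intro Q hQ
    beta_reduce
    rw [Finset.mem_filter] at hQ
    obtain ⟨-, hle, hQ2⟩ := hQ
    set A := Q.part v0 with hA
    have hAmem : A ∈ Q.parts := Q.part_mem.2 (mem_univ v0)
    obtain ⟨B, hBmem, hBA, hparts, hunion, hdisj⟩ := two_parts_structure Q hQ2 hAmem
    have hsplit : ∀ t ∈ P.parts, t ⊆ A ∨ t ⊆ B := by
      intro t ht
      obtain ⟨c, hc, htc⟩ := hle ht
      rw [hparts, Finset.mem_insert, Finset.mem_singleton] at hc
      rcases hc with rfl | rfl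
      · exact Or.inl htc
      · exact Or.inr htc
    rw [Finset.mem_erase, Finset.mem_powerset]
    constructor
    · -- nonempty: B gives an element
      obtain ⟨w, hw⟩ := Q.nonempty_of_mem_parts hBmem
      have htw : P.part w ∈ P.parts := P.part_mem.2 (mem_univ w)
      have hwtw : w ∈ P.part w := P.mem_part (mem_univ w)
      have : ¬ P.part w ⊆ A := by
        intro hsubA
        exact Finset.disjoint_left.mp hdisj (hsubA hwtw) hw
      intro hemp
      have : P.part w ∈ P.parts.filter fun t => ¬ t ⊆ Q.part v0 :=
        Finset.mem_filter.mpr ⟨htw, this⟩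
      rw [hemp] at this
      exact absurd this (Finset.notMem_empty _)
    · -- subset of parts.erase t0
      intro t ht
      rw [Finset.mem_filter] at ht
      rw [Finset.mem_erase]
      refine ⟨?_, ht.1⟩
      rintro rfl
      -- t0 ⊆ A
      rcases hsplit t0 ht0mem with h | h
      · exact ht.2 h
      · have : v0 ∈ A := Q.mem_part (mem_univ v0)
        exact Finset.disjoint_left.mp hdisj this (h hv0t0)
  · -- ψ lands in the filter set
    intro S hS
    beta_reduce
    rw [Finset.mem_erase, Finset.mem_powerset] at hS
    obtain ⟨hSne, hSsub⟩ := hS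
    have hBne : (S.sup id).Nonempty := by
      obtain ⟨t, ht⟩ := Finset.nonempty_iff_ne_empty.mpr hSne
      obtain ⟨x, hx⟩ := P.nonempty_of_mem_parts (Finset.mem_of_mem_erase (hSsub ht))
      exact ⟨x, Finset.mem_sup.mpr ⟨t, ht, hx⟩⟩
    have hv0B : v0 ∉ S.sup id := by
      intro h
      obtain ⟨t, htS, hvt⟩ := Finset.mem_sup.mp h
      have ht' := hSsub htS
      rw [Finset.mem_erase] at ht'
      exact ht'.1 (P.eq_of_mem_parts ht'.2 ht0mem hvt hv0t0)
    have hBuniv : S.sup id ≠ univ := fun h => hv0B (h ▸ mem_univ v0)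
    rw [dif_pos ⟨hBne, hBuniv⟩]
    try simp only [id_eq]
    rw [Finset.mem_filter]
    refine ⟨mem_univ _, ?_, bipartOf_card _ _ _⟩
    -- P ≤ bipartOf
    intro t ht
    by_cases htS : t ∈ S
    · refine ⟨S.sup id, ?_, Finset.le_sup (f := id) htS⟩
      rw [bipartOf_parts]
      exact Finset.mem_insert_of_mem (Finset.mem_singleton_self _)
    · refine ⟨univ \ S.sup id, ?_, ?_⟩
      · rw [bipartOf_parts]; exact Finset.mem_insert_self _ _
      · intro x hx
        rw [Finset.mem_sdiff]
        refine ⟨mem_univ x, fun hxB => ?_⟩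
        obtain ⟨t', ht'S, hxt'⟩ := Finset.mem_sup.mp hxB
        have hne : t ≠ t' := fun h => htS (h ▸ ht'S)
        exact Finset.disjoint_left.mp
          (P.disjoint ht (Finset.mem_of_mem_erase (hSsub ht'S)) hne) hx hxt'
  · -- left inverse : ψ (φ Q) = Q
    intro Q hQ
    beta_reduce
    rw [Finset.mem_filter] at hQ
    obtain ⟨-, hle, hQ2⟩ := hQ
    set A := Q.part v0 with hA
    have hAmem : A ∈ Q.parts := Q.part_mem.2 (mem_univ v0)
    obtain ⟨B, hBmem, hBA, hparts, hunion, hdisj⟩ := two_parts_structure Q hQ2 hAmem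
    have hsplit : ∀ t ∈ P.parts, t ⊆ A ∨ t ⊆ B := by
      intro t ht
      obtain ⟨c, hc, htc⟩ := hle ht
      rw [hparts, Finset.mem_insert, Finset.mem_singleton] at hc
      rcases hc with rfl | rfl
      · exact Or.inl htc
      · exact Or.inr htc
    set S := P.parts.filter fun t => ¬ t ⊆ Q.part v0 with hSdef
    have hsupB : S.sup id = B := by
      apply le_antisymm
      · apply Finset.sup_le
        intro t ht
        rw [hSdef, Finset.mem_filter] at ht
        rcases hsplit t ht.1 with h | h
        · exact absurd h ht.2
        · exact h
      · intro w hw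
        have htw : P.part w ∈ P.parts := P.part_mem.2 (mem_univ w)
        have hwtw : w ∈ P.part w := P.mem_part (mem_univ w)
        have hnsub : ¬ P.part w ⊆ A := fun hsubA =>
          Finset.disjoint_left.mp hdisj (hsubA hwtw) hw
        exact Finset.le_sup (f := id) (Finset.mem_filter.mpr ⟨htw, hnsub⟩) hwtw
    have hcomp : univ \ B = A := by
      ext x
      rw [Finset.mem_sdiff]
      constructor
      · rintro ⟨hxu, hxB⟩
        have : x ∈ A ∪ B := hunion ▸ hxu
        rcases Finset.mem_union.mp this with h | h
        · exact h
        · exact absurd h hxB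
      · intro hxA
        exact ⟨mem_univ x, fun hxB => Finset.disjoint_left.mp hdisj hxA hxB⟩
    have hBne : (S.sup id).Nonempty := hsupB ▸ Q.nonempty_of_mem_parts hBmem
    have hBuniv : S.sup id ≠ univ := by
      rw [hsupB]
      intro h
      have : v0 ∈ B := h ▸ mem_univ v0
      exact Finset.disjoint_left.mp hdisj (Q.mem_part (mem_univ v0)) this
    rw [dif_pos ⟨hBne, hBuniv⟩]
    try simp only [id_eq]
    apply Finpartition.ext
    rw [bipartOf_parts, hsupB, hcomp, hparts]
  · -- right inverse : φ (ψ S) = S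
    intro S hS
    beta_reduce
    rw [Finset.mem_erase, Finset.mem_powerset] at hS
    obtain ⟨hSne, hSsub⟩ := hS
    have hBne : (S.sup id).Nonempty := by
      obtain ⟨t, ht⟩ := Finset.nonempty_iff_ne_empty.mpr hSne
      obtain ⟨x, hx⟩ := P.nonempty_of_mem_parts (Finset.mem_of_mem_erase (hSsub ht))
      exact ⟨x, Finset.mem_sup.mpr ⟨t, ht, hx⟩⟩
    have hv0B : v0 ∉ S.sup id := by
      intro h
      obtain ⟨t, htS, hvt⟩ := Finset.mem_sup.mp h
      have ht' := hSsub htS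
      rw [Finset.mem_erase] at ht'
      exact ht'.1 (P.eq_of_mem_parts ht'.2 ht0mem hvt hv0t0)
    have hBuniv : S.sup id ≠ univ := fun h => hv0B (h ▸ mem_univ v0)
    rw [dif_pos ⟨hBne, hBuniv⟩]
    try simp only [id_eq]
    set Q := bipartOf (S.sup id) hBne hBuniv with hQdef
    have hpart : Q.part v0 = univ \ S.sup id := by
      apply Q.part_eq_of_mem
      · rw [hQdef, bipartOf_parts]; exact Finset.mem_insert_self _ _
      · rw [Finset.mem_sdiff]; exact ⟨mem_univ v0, hv0B⟩
    simp only [hpart]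
    ext t
    rw [Finset.mem_filter]
    constructor
    · rintro ⟨htP, htn⟩
      by_contra htS
      apply htn
      intro x hx
      rw [Finset.mem_sdiff]
      refine ⟨mem_univ x, fun hxB => ?_⟩
      obtain ⟨t', ht'S, hxt'⟩ := Finset.mem_sup.mp hxB
      have hne : t ≠ t' := fun h => htS (h ▸ ht'S)
      exact Finset.disjoint_left.mp
        (P.disjoint htP (Finset.mem_of_mem_erase (hSsub ht'S)) hne) hx hxt'
    · intro htS
      have htP : t ∈ P.parts := Finset.mem_of_mem_erase (hSsub htS)
      refine ⟨htP, fun hsub => ?_⟩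
      obtain ⟨x, hx⟩ := P.nonempty_of_mem_parts htP
      have : x ∈ univ \ S.sup id := hsub hx
      rw [Finset.mem_sdiff] at this
      exact this.2 (Finset.mem_sup.mpr ⟨t, htS, hx⟩)

end bip

end auxMerge

section auxCut
variable {i : ℕ}

lemma cutExp_eq (P : Finpartition (univ : Finset (Fin i))) : cutExp P = eind (cutEdges P) := rfl

lemma cutExp_le_iff {P Q : Finpartition (univ : Finset (Fin i))} :
    cutExp P ≤ cutExp Q ↔ Q ≤ P := by
  rw [cutExp_eq, cutExp_eq, eind_le_iff, cutEdges_subset_iff_le]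

lemma cutExp_inj {P Q : Finpartition (univ : Finset (Fin i))}
    (h : cutExp P = cutExp Q) : P = Q :=
  cutEdges_inj (eind_inj h)

lemma cutExp_sup {P Q : Finpartition (univ : Finset (Fin i))} :
    cutExp P ⊔ cutExp Q = cutExp (P ⊓ Q) := by
  rw [cutExp_eq, cutExp_eq, cutExp_eq, cutEdges_inf, eind_union]

lemma mem_cutGens {j : ℕ} {μ : Edge i →₀ ℕ} :
    μ ∈ cutGens i j ↔
      ∃ P : Finpartition (univ : Finset (Fin i)), P.parts.card = j ∧ cutExp P = μ := by
  simp [cutGens, Set.Finite.mem_toFinset, Set.mem_image, Set.mem_setOf_eq]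

lemma card_univ_fin : #(univ : Finset (Fin i)) = i := by simp

lemma two_le_of_cutGens_nonempty (h : (cutGens i 2).Nonempty) : 2 ≤ i := by
  obtain ⟨μ, hμ⟩ := h
  obtain ⟨P, hP, -⟩ := mem_cutGens.mp hμ
  calc 2 = P.parts.card := hP.symm
  _ ≤ #(univ : Finset (Fin i)) := P.card_parts_le_card
  _ = i := card_univ_fin

lemma cutGens_nonempty {j : ℕ} (h1 : 1 ≤ j) (h2 : j ≤ i) : (cutGens i j).Nonempty := by
  have hbot : ((⊥ : Finpartition (univ : Finset (Fin i)))).parts.card = i := by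
    rw [Finpartition.card_bot, card_univ_fin]
  obtain ⟨Q, -, hQc⟩ := exists_coarsening_card ⊥ j h1 (by rw [hbot]; exact h2)
  exact ⟨cutExp Q, mem_cutGens.mpr ⟨Q, hQc, rfl⟩⟩

lemma spart_mergeP {R : Finpartition (univ : Finset (Fin i))} {a b : Finset (Fin i)}
    (ha : a ∈ R.parts) (hb : b ∈ R.parts) (hab : a ≠ b) (v w : Fin i) :
    spart (mergeP R ha hb hab) v w ↔ spart R v w ∨ (v ∈ a ∪ b ∧ w ∈ a ∪ b) := by
  constructor
  · rintro ⟨t, ht, hv, hw⟩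
    rw [mergeP_parts, Finset.mem_insert] at ht
    rcases ht with rfl | ht
    · exact Or.inr ⟨hv, hw⟩
    · exact Or.inl ⟨t, Finset.mem_of_mem_erase (Finset.mem_of_mem_erase ht), hv, hw⟩
  · rintro (⟨t, ht, hv, hw⟩ | ⟨hv, hw⟩)
    · by_cases hta : t = a
      · subst hta
        exact ⟨t ∪ b, Finset.mem_insert_self _ _,
          Finset.mem_union_left _ hv, Finset.mem_union_left _ hw⟩
      by_cases htb : t = b
      · subst htb
        exact ⟨a ∪ t, Finset.mem_insert_self _ _,
          Finset.mem_union_right _ hv, Finset.mem_union_right _ hw⟩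
      · exact ⟨t, Finset.mem_insert_of_mem (Finset.mem_erase.mpr ⟨htb,
          Finset.mem_erase.mpr ⟨hta, ht⟩⟩), hv, hw⟩
    · exact ⟨a ∪ b, Finset.mem_insert_self _ _, hv, hw⟩

lemma mergeP_inf_mergeP {R : Finpartition (univ : Finset (Fin i))} {a b c : Finset (Fin i)}
    (ha : a ∈ R.parts) (hb : b ∈ R.parts) (hc : c ∈ R.parts)
    (hab : a ≠ b) (hac : a ≠ c) (hbc : b ≠ c) :
    mergeP R ha hb hab ⊓ mergeP R ha hc hac = R := by
  apply le_antisymm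
  · rw [le_iff_spart]
    intro v w hs
    rw [spart_inf, spart_mergeP, spart_mergeP] at hs
    obtain ⟨h1', h2'⟩ := hs
    rcases h1' with h | ⟨hv1, hw1⟩
    · exact h
    rcases h2' with h | ⟨hv2, hw2⟩
    · exact h
    have hva : v ∈ a := by
      rcases Finset.mem_union.mp hv1 with h | h
      · exact h
      rcases Finset.mem_union.mp hv2 with h' | h'
      · exact h'
      · exact absurd h' (Finset.disjoint_left.mp (R.disjoint hb hc hbc) h)
    have hwa : w ∈ a := by
      rcases Finset.mem_union.mp hw1 with h | h
      · exact h
      rcases Finset.mem_union.mp hw2 with h' | h'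
      · exact h'
      · exact absurd h' (Finset.disjoint_left.mp (R.disjoint hb hc hbc) h)
    exact ⟨a, ha, hva, hwa⟩
  · exact le_inf (le_mergeP R ha hb hab) (le_mergeP R ha hc hac)

lemma cutExp_merge_pair {R : Finpartition (univ : Finset (Fin i))} {a b c : Finset (Fin i)}
    (ha : a ∈ R.parts) (hb : b ∈ R.parts) (hc : c ∈ R.parts)
    (hab : a ≠ b) (hac : a ≠ c) (hbc : b ≠ c) :
    cutExp (mergeP R ha hb hab) ⊔ cutExp (mergeP R ha hc hac) = cutExp R := by
  rw [cutExp_sup, mergeP_inf_mergeP ha hb hc hab hac hbc]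

lemma mergeP_ne {β : Type*} [DecidableEq β] {s : Finset β} {R : Finpartition s}
    {a b c : Finset β} (ha : a ∈ R.parts) (hb : b ∈ R.parts) (hc : c ∈ R.parts)
    (hab : a ≠ b) (hac : a ≠ c) (hbc : b ≠ c) :
    mergeP R ha hb hab ≠ mergeP R ha hc hac := by
  intro h
  have hm : a ∪ b ∈ (mergeP R ha hc hac).parts := by
    rw [← h, mergeP_parts]
    exact Finset.mem_insert_self _ _
  rw [mergeP_parts] at hm
  rcases Finset.mem_insert.mp hm with heq | hm
  · obtain ⟨x, hx⟩ := R.nonempty_of_mem_parts hb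
    have hx' : x ∈ a ∪ c := heq ▸ Finset.mem_union_right a hx
    rcases Finset.mem_union.mp hx' with h' | h'
    · exact Finset.disjoint_left.mp (R.disjoint ha hb hab) h' hx
    · exact Finset.disjoint_left.mp (R.disjoint hb hc hbc) hx h'
  · exact union_not_mem_erase R ha hb hab
      (Finset.mem_of_mem_erase (Finset.mem_of_mem_erase hm))

lemma sup_cutExp_inf' (𝒬 : Finset (Finpartition (univ : Finset (Fin i)))) (h : 𝒬.Nonempty) :
    𝒬.sup cutExp = cutExp (𝒬.inf' h id) := by
  induction h using Finset.Nonempty.cons_induction with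
  | singleton a => simp
  | cons a s ha hs ih =>
    rw [Finset.sup_cons, Finset.inf'_cons, ih, cutExp_sup]
    rfl

/-- structure of a `k`-fold lcm of distinct 2-cuts -/
lemma sup_structure {k : ℕ} (hk1 : 1 ≤ k) {T : Finset (Edge i →₀ ℕ)}
    (hT : T ∈ (cutGens i 2).powersetCard k) :
    ∃ R : Finpartition (univ : Finset (Fin i)), cutExp R = T.sup id ∧
      2 ≤ R.parts.card ∧ R.parts.card ≤ i ∧ k + 1 ≤ 2 ^ (R.parts.card - 1) := by
  rw [Finset.mem_powersetCard] at hT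
  obtain ⟨hTsub, hTcard⟩ := hT
  have hTne : T.Nonempty := Finset.card_pos.mp (by omega)
  have hi2 : 2 ≤ i := two_le_of_cutGens_nonempty ⟨_, hTsub hTne.choose_spec⟩
  set 𝒬 : Finset (Finpartition (univ : Finset (Fin i))) :=
    univ.filter fun Q => Q.parts.card = 2 ∧ cutExp Q ∈ T with h𝒬
  have himg : 𝒬.image cutExp = T := by
    ext μ
    rw [Finset.mem_image]
    constructor
    · rintro ⟨Q, hQ, rfl⟩
      exact ((Finset.mem_filter.mp hQ).2).2
    · intro hμ
      obtain ⟨P, hP2, hPμ⟩ := mem_cutGens.mp (hTsub hμ)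
      exact ⟨P, Finset.mem_filter.mpr ⟨mem_univ _, hP2, hPμ ▸ hμ⟩, hPμ⟩
  have h𝒬card : 𝒬.card = k := by
    rw [← hTcard, ← himg]
    exact (Finset.card_image_of_injOn fun x _ y _ h => cutExp_inj h).symm
  have h𝒬ne : 𝒬.Nonempty := by
    obtain ⟨μ, hμ⟩ := hTne
    obtain ⟨P, hP2, hPμ⟩ := mem_cutGens.mp (hTsub hμ)
    exact ⟨P, Finset.mem_filter.mpr ⟨mem_univ _, hP2, hPμ ▸ hμ⟩⟩
  set R := 𝒬.inf' h𝒬ne id with hR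
  have hsup : cutExp R = T.sup id := by
    rw [← himg, Finset.sup_image]
    have : (id ∘ cutExp : Finpartition (univ : Finset (Fin i)) → Edge i →₀ ℕ) = cutExp := rfl
    rw [this, sup_cutExp_inf']
  obtain ⟨Q0, hQ0⟩ := h𝒬ne
  have hQ0' := Finset.mem_filter.mp hQ0
  have hle0 : R ≤ Q0 := Finset.inf'_le id hQ0
  have h2R : 2 ≤ R.parts.card := hQ0'.2.1 ▸ Finpartition.card_mono hle0
  have hiR : R.parts.card ≤ i := le_trans R.card_parts_le_card (le_of_eq card_univ_fin)
  refine ⟨R, hsup, h2R, hiR, ?_⟩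
  have hsub : 𝒬 ⊆ univ.filter fun Q => R ≤ Q ∧ Q.parts.card = 2 := by
    intro Q hQ
    have hQ' := Finset.mem_filter.mp hQ
    exact Finset.mem_filter.mpr ⟨mem_univ _, Finset.inf'_le id hQ, hQ'.2.1⟩
  have hcount := card_bipartition_coarsenings (by omega : 0 < i) R
  have hk' : k ≤ 2 ^ (R.parts.card - 1) - 1 := by
    rw [← h𝒬card, ← hcount]
    exact Finset.card_le_card hsub
  have hpow : 1 ≤ 2 ^ (R.parts.card - 1) := Nat.one_le_two_pow
  omega

/-- a `j`-cut dominates a `k`-fold lcm of 2-cuts whenever `k ≤ 2^(j-1) - 1`. -/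
lemma exists_subset_sup_le {j k : ℕ} (hk1 : 1 ≤ k) (hkj : k + 1 ≤ 2 ^ (j - 1))
    (Q : Finpartition (univ : Finset (Fin i))) (hQ : Q.parts.card = j) (hj : 2 ≤ j) :
    ∃ T ∈ (cutGens i 2).powersetCard k, T.sup id ≤ cutExp Q := by
  have hi : 0 < i := by
    have := Q.card_parts_le_card
    rw [card_univ_fin, hQ] at this
    omega
  have hcount := card_bipartition_coarsenings hi Q
  rw [hQ] at hcount
  have hkle : k ≤ ((univ : Finset (Finpartition (univ : Finset (Fin i)))).filter
      fun Q' => Q ≤ Q' ∧ Q'.parts.card = 2).card := by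
    rw [hcount]; omega
  obtain ⟨𝒬, h𝒬sub, h𝒬card⟩ := Finset.exists_subset_card_eq hkle
  refine ⟨𝒬.image cutExp, ?_, ?_⟩
  · rw [Finset.mem_powersetCard]
    constructor
    · rintro μ hμ
      obtain ⟨Q', hQ', rfl⟩ := Finset.mem_image.mp hμ
      exact mem_cutGens.mpr ⟨Q', ((Finset.mem_filter.mp (h𝒬sub hQ')).2).2, rfl⟩
    · rw [Finset.card_image_of_injOn fun x _ y _ h => cutExp_inj h]
      exact h𝒬card
  · apply Finset.sup_le
    rintro μ hμ
    obtain ⟨Q', hQ', rfl⟩ := Finset.mem_image.mp hμ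
    exact cutExp_le_iff.mpr ((Finset.mem_filter.mp (h𝒬sub hQ')).2).1

/-- the `k`-fold lcm ideal of the cut ideal is `P_{i,j}` with `j = clog 2 (k+1) + 1`. -/
lemma lcmFold_eq_Pij (K : Type*) [Field K] {k : ℕ} (hk1 : 1 ≤ k)
    (hkr : k ≤ (cutGens i 2).card) :
    2 ≤ Nat.clog 2 (k + 1) + 1 ∧ Nat.clog 2 (k + 1) + 1 ≤ i ∧
      lcmFoldIdeal K (cutGens i 2) k = Pij K i (Nat.clog 2 (k + 1) + 1) := by
  set j := Nat.clog 2 (k + 1) + 1 with hj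
  have hclogpos : 0 < Nat.clog 2 (k + 1) := Nat.clog_pos one_lt_two (by omega)
  have hj2 : 2 ≤ j := by omega
  -- an element of the powersetCard exists
  have hpow : ((cutGens i 2).powersetCard k).Nonempty := by
    rw [Finset.powersetCard_nonempty]
    exact hkr
  obtain ⟨T0, hT0⟩ := hpow
  obtain ⟨R0, -, h2R0, hiR0, hkR0⟩ := sup_structure hk1 hT0
  have hji : j ≤ i := by
    have : Nat.clog 2 (k + 1) ≤ R0.parts.card - 1 :=
      (Nat.clog_le_iff_le_pow one_lt_two).mpr hkR0
    omega
  refine ⟨hj2, hji, ?_⟩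
  have hkj : k + 1 ≤ 2 ^ (j - 1) := by
    have := Nat.le_pow_clog one_lt_two (k + 1)
    simpa [hj] using this
  apply le_antisymm
  · rw [lcmFoldIdeal, Pij, monIdeal_le_iff]
    intro μ hμ
    simp only [lcmFoldGens, Finset.mem_image] at hμ
    obtain ⟨T, hT, rfl⟩ := hμ
    obtain ⟨R, hRsup, h2R, hiR, hkR⟩ := sup_structure hk1 hT
    have hjR : j ≤ R.parts.card := by
      have : Nat.clog 2 (k + 1) ≤ R.parts.card - 1 :=
        (Nat.clog_le_iff_le_pow one_lt_two).mpr hkR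
      omega
    obtain ⟨Q, hQle, hQc⟩ := exists_coarsening_card R j (by omega) hjR
    refine ⟨cutExp Q, mem_cutGens.mpr ⟨Q, hQc, rfl⟩, ?_⟩
    rw [← hRsup]
    exact cutExp_le_iff.mpr hQle
  · rw [lcmFoldIdeal, Pij, monIdeal_le_iff]
    intro μ hμ
    obtain ⟨Q, hQc, rfl⟩ := mem_cutGens.mp hμ
    obtain ⟨T, hT, hTle⟩ := exists_subset_sup_le hk1 hkj Q hQc hj2
    refine ⟨T.sup id, ?_, hTle⟩
    simp only [lcmFoldGens, Finset.mem_image]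
    exact ⟨T, hT, rfl⟩

/-- identify the minimal generators with the `j`-cuts -/
lemma minGen_eq_cutGens {j : ℕ} {S : Finset (Edge i →₀ ℕ)} (hj : 1 ≤ j)
    (hS : cutGens i j ⊆ S)
    (hstruct : ∀ μ ∈ S, ∃ Q : Finpartition (univ : Finset (Fin i)),
      cutExp Q = μ ∧ j ≤ Q.parts.card) :
    minGen S = cutGens i j := by
  ext μ
  simp only [minGen, Finset.mem_filter]
  constructor
  · rintro ⟨hμS, hmin⟩
    obtain ⟨Q, rfl, hjQ⟩ := hstruct μ hμS
    obtain ⟨Q', hQ'le, hQ'c⟩ := exists_coarsening_card Q j hj hjQ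
    have hν : cutExp Q' ∈ S := hS (mem_cutGens.mpr ⟨Q', hQ'c, rfl⟩)
    have := hmin _ hν (cutExp_le_iff.mpr hQ'le)
    rw [← this]
    exact mem_cutGens.mpr ⟨Q', hQ'c, rfl⟩
  · intro hμ
    obtain ⟨Q, hQc, rfl⟩ := mem_cutGens.mp hμ
    refine ⟨hS hμ, ?_⟩
    intro ν hν hle
    obtain ⟨R', rfl, hjR'⟩ := hstruct ν hν
    have hQR' : Q ≤ R' := cutExp_le_iff.mp hle
    have hcard : R'.parts.card = Q.parts.card := by
      have := Finpartition.card_mono hQR'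
      omega
    rw [finpartition_eq_of_le_of_card hQR' hcard]

lemma stepGens_spec (K : Type*) [Field K] :
    ∀ m : ℕ, m + 2 ≤ i →
      minGen (stepGens (cutGens i 2) m) = cutGens i (m + 2) ∧
      (∀ μ ∈ stepGens (cutGens i 2) m, ∃ Q : Finpartition (univ : Finset (Fin i)),
        cutExp Q = μ ∧ m + 2 ≤ Q.parts.card) ∧
      cutGens i (m + 2) ⊆ stepGens (cutGens i 2) m := by
  intro m
  induction m with
  | zero =>
    intro hi
    have hstruct : ∀ μ ∈ stepGens (cutGens i 2) 0,
        ∃ Q : Finpartition (univ : Finset (Fin i)), cutExp Q = μ ∧ 2 ≤ Q.parts.card := by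
      intro μ hμ
      obtain ⟨Q, hQc, rfl⟩ := mem_cutGens.mp hμ
      exact ⟨Q, rfl, hQc.ge⟩
    exact ⟨minGen_eq_cutGens (by omega) (Finset.Subset.refl _) hstruct, hstruct, Finset.Subset.refl _⟩
  | succ m ih =>
    intro hi
    obtain ⟨ihmin, ihstruct, ihsub⟩ := ih (by omega)
    have hstep : stepGens (cutGens i 2) (m + 1) = pairLcms (cutGens i (m + 2)) := by
      show pairLcms (minGen (stepGens (cutGens i 2) m)) = _
      rw [ihmin]
    have hstruct : ∀ μ ∈ stepGens (cutGens i 2) (m + 1),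
        ∃ Q : Finpartition (univ : Finset (Fin i)), cutExp Q = μ ∧ m + 3 ≤ Q.parts.card := by
      intro μ hμ
      rw [hstep] at hμ
      simp only [pairLcms, Finset.mem_image, Finset.mem_filter, Finset.mem_product] at hμ
      obtain ⟨⟨μ1, μ2⟩, ⟨⟨h1, h2⟩, hne⟩, rfl⟩ := hμ
      obtain ⟨P1, hP1c, rfl⟩ := mem_cutGens.mp h1
      obtain ⟨P2, hP2c, rfl⟩ := mem_cutGens.mp h2
      have hP12 : P1 ≠ P2 := fun h => hne (by rw [h])
      refine ⟨P1 ⊓ P2, (cutExp_sup).symm, ?_⟩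
      have hle1 : P1 ⊓ P2 ≤ P1 := inf_le_left
      have hle2 : P1 ⊓ P2 ≤ P2 := inf_le_right
      have hcard1 : P1.parts.card ≤ (P1 ⊓ P2).parts.card := Finpartition.card_mono hle1
      by_contra hlt
      push_neg at hlt
      have hc1 : P1.parts.card = (P1 ⊓ P2).parts.card := by omega
      have hc2 : P2.parts.card = (P1 ⊓ P2).parts.card := by
        have := Finpartition.card_mono hle2
        omega
      have he1 : P1 ⊓ P2 = P1 := finpartition_eq_of_le_of_card hle1 hc1
      have he2 : P1 ⊓ P2 = P2 := finpartition_eq_of_le_of_card hle2 hc2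
      exact hP12 (he1 ▸ he2)
    have hsub : cutGens i (m + 3) ⊆ stepGens (cutGens i 2) (m + 1) := by
      intro μ hμ
      obtain ⟨R, hRc, rfl⟩ := mem_cutGens.mp hμ
      -- pick three distinct parts
      have h3 : 3 ≤ R.parts.card := by omega
      obtain ⟨a, haa, b, hbb, hab⟩ := Finset.one_lt_card.mp (by omega : 1 < R.parts.card)
      have hcne : ((R.parts.erase a).erase b).Nonempty := by
        rw [← Finset.card_pos, Finset.card_erase_of_mem (Finset.mem_erase.mpr ⟨Ne.symm hab, hbb⟩),
          Finset.card_erase_of_mem haa]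
        omega
      obtain ⟨c, hc⟩ := hcne
      have hbc : b ≠ c := fun h => (Finset.mem_erase.mp hc).1 h.symm
      have hac : a ≠ c := fun h =>
        (Finset.mem_erase.mp (Finset.mem_of_mem_erase hc)).1 h.symm
      have hcc : c ∈ R.parts := Finset.mem_of_mem_erase (Finset.mem_of_mem_erase hc)
      set P1 := mergeP R haa hbb hab with hP1
      set P2 := mergeP R haa hcc hac with hP2
      have hc1 : P1.parts.card = m + 2 := by
        rw [hP1, mergeP_parts_card]; omega
      have hc2 : P2.parts.card = m + 2 := by
        rw [hP2, mergeP_parts_card]; omega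
      have hne : cutExp P1 ≠ cutExp P2 := fun h =>
        mergeP_ne haa hbb hcc hab hac hbc (cutExp_inj h)
      rw [hstep]
      simp only [pairLcms, Finset.mem_image, Finset.mem_filter, Finset.mem_product]
      exact ⟨(cutExp P1, cutExp P2), ⟨⟨mem_cutGens.mpr ⟨P1, hc1, rfl⟩,
        mem_cutGens.mpr ⟨P2, hc2, rfl⟩⟩, hne⟩, cutExp_merge_pair haa hbb hcc hab hac hbc⟩
    refine ⟨?_, ?_, ?_⟩
    · exact minGen_eq_cutGens (by omega) (by
        have : m + 1 + 2 = m + 3 := by omega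
        rw [this]; exact hsub) (by
        have : m + 1 + 2 = m + 3 := by omega
        rw [this]; exact hstruct)
    · have : m + 1 + 2 = m + 3 := by omega
      rw [this]; exact hstruct
    · have : m + 1 + 2 = m + 3 := by omega
      rw [this]; exact hsub

lemma stepIdeal_eq_Pij (K : Type*) [Field K] {m : ℕ} (hm : m + 2 ≤ i) :
    monIdeal K (stepGens (cutGens i 2) m) = Pij K i (m + 2) := by
  obtain ⟨-, hstruct, hsub⟩ := stepGens_spec K m hm
  rw [Pij, monIdeal_eq_iff]
  constructor
  · intro μ hμ
    obtain ⟨Q, rfl, hjQ⟩ := hstruct μ hμ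
    obtain ⟨Q', hQ'le, hQ'c⟩ := exists_coarsening_card Q (m + 2) (by omega) hjQ
    exact ⟨cutExp Q', mem_cutGens.mpr ⟨Q', hQ'c, rfl⟩, cutExp_le_iff.mpr hQ'le⟩
  · intro μ hμ
    exact ⟨μ, hsub hμ, le_refl μ⟩

lemma pairLcms_empty : pairLcms (∅ : Finset (Edge i →₀ ℕ)) = ∅ := by
  simp [pairLcms]

lemma minGen_empty : minGen (∅ : Finset (Edge i →₀ ℕ)) = ∅ := by
  simp [minGen]

lemma cutGens_two_empty (hi : i < 2) : cutGens i 2 = ∅ := by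
  rw [Finset.eq_empty_iff_forall_notMem]
  intro μ hμ
  exact absurd (two_le_of_cutGens_nonempty ⟨μ, hμ⟩) (by omega)

lemma stepGens_empty_small (hi : i < 2) (m : ℕ) : stepGens (cutGens i 2) m = ∅ := by
  induction m with
  | zero => exact cutGens_two_empty hi
  | succ m ih =>
    show pairLcms (minGen (stepGens (cutGens i 2) m)) = ∅
    rw [ih, minGen_empty, pairLcms_empty]

lemma partition_eq_bot {P : Finpartition (univ : Finset (Fin i))} (h : P.parts.card = i) :
    P = ⊥ := by
  have hb : (⊥ : Finpartition (univ : Finset (Fin i))).parts.card = i := by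
    rw [Finpartition.card_bot, card_univ_fin]
  exact (finpartition_eq_of_le_of_card bot_le (by rw [h, hb])).symm

lemma stepGens_empty_large (K : Type*) [Field K] (hi : 2 ≤ i) {m : ℕ} (hm : i - 1 ≤ m) :
    stepGens (cutGens i 2) m = ∅ := by
  induction m, hm using Nat.le_induction with
  | base =>
    obtain ⟨m0, hm0⟩ : ∃ m0, i = m0 + 2 := ⟨i - 2, by omega⟩
    have hspec := (stepGens_spec (i := i) K m0 (by omega)).1
    have hone : i - 1 = m0 + 1 := by omega
    rw [hone]
    show pairLcms (minGen (stepGens (cutGens i 2) m0)) = ∅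
    rw [hspec]
    simp only [pairLcms, Finset.image_eq_empty, Finset.filter_eq_empty_iff]
    rintro ⟨μ1, μ2⟩ hp
    simp only [Finset.mem_product] at hp
    obtain ⟨P1, hP1c, h1⟩ := mem_cutGens.mp hp.1
    obtain ⟨P2, hP2c, h2⟩ := mem_cutGens.mp hp.2
    have hP1 : P1 = ⊥ := partition_eq_bot (by omega)
    have hP2 : P2 = ⊥ := partition_eq_bot (by omega)
    simp only [ne_eq, not_not]
    have h1' : cutExp P1 = μ1 := h1
    have h2' : cutExp P2 = μ2 := h2
    show μ1 = μ2
    rw [← h1', ← h2', hP1, hP2]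
  | succ m hm ih =>
    show pairLcms (minGen (stepGens (cutGens i 2) m)) = ∅
    rw [ih, minGen_empty, pairLcms_empty]

lemma card_cutGens_two (hi : 0 < i) : (cutGens i 2).card = 2 ^ (i - 1) - 1 := by
  have himg : cutGens i 2 = (univ.filter fun Q : Finpartition (univ : Finset (Fin i)) =>
      Q.parts.card = 2).image cutExp := by
    ext μ
    rw [mem_cutGens, Finset.mem_image]
    constructor
    · rintro ⟨P, hP, rfl⟩
      exact ⟨P, Finset.mem_filter.mpr ⟨mem_univ _, hP⟩, rfl⟩
    · rintro ⟨P, hP, rfl⟩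
      exact ⟨P, (Finset.mem_filter.mp hP).2, rfl⟩
  have hfeq : (univ.filter fun Q : Finpartition (univ : Finset (Fin i)) => Q.parts.card = 2)
      = univ.filter fun Q => (⊥ : Finpartition (univ : Finset (Fin i))) ≤ Q ∧
          Q.parts.card = 2 := by
    apply Finset.filter_congr
    intro Q _
    constructor
    · intro h
      exact ⟨bot_le, h⟩
    · exact And.right
  rw [himg, Finset.card_image_of_injOn fun x _ y _ h => cutExp_inj h, hfeq,
    card_bipartition_coarsenings hi ⊥, Finpartition.card_bot, card_univ_fin]

end auxCut

/-- Let `I` be the cut ideal of the complete graph `K_i`, with minimal monomial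
generating set (the cut monomials of the `2`-partitions) of cardinality `r`.  Then the set of
ideals `{I_k : 1 ≤ k ≤ r}` appearing in the lcm-filtration of `I` equals the set of ideals
`{Ī_k : k ≥ 1}` appearing in the stepwise lcm-filtration of `I` (the stepwise filtration
terminates once the generating set of lcm's of pairs of distinct minimal generators is empty). -/
theorem cutIdeal_lcmFiltration_eq_stepwiseFiltration (K : Type*) [Field K] (i : ℕ) :
    {J : Ideal (MvPolynomial (Edge i) K) |
        ∃ k, 1 ≤ k ∧ k ≤ (cutGens i 2).card ∧ J = lcmFoldIdeal K (cutGens i 2) k} =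
      {J : Ideal (MvPolynomial (Edge i) K) |
        ∃ k, 1 ≤ k ∧ (stepGens (cutGens i 2) (k - 1)).Nonempty ∧
          J = stepIdeal K (cutGens i 2) k} := by
  ext J
  simp only [Set.mem_setOf_eq]
  constructor
  · rintro ⟨k, hk1, hkr, rfl⟩
    obtain ⟨hj2, hji, hIk⟩ := lcmFold_eq_Pij K hk1 hkr
    set j := Nat.clog 2 (k + 1) + 1 with hjdef
    refine ⟨j - 1, by omega, ?_, ?_⟩
    · have hsub := (stepGens_spec (i := i) K (j - 2) (by omega)).2.2
      rw [show j - 2 + 2 = j by omega] at hsub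
      have hne := cutGens_nonempty (by omega : 1 ≤ j) hji
      rw [show j - 1 - 1 = j - 2 by omega]
      exact hne.mono hsub
    · rw [hIk, stepIdeal, show j - 1 - 1 = j - 2 by omega]
      have h := stepIdeal_eq_Pij K (i := i) (m := j - 2) (by omega)
      rw [show j - 2 + 2 = j by omega] at h
      exact h.symm
  · rintro ⟨k, hk1, hne, rfl⟩
    have hi2 : 2 ≤ i := by
      by_contra h
      rw [stepGens_empty_small (by omega) (k - 1)] at hne
      exact absurd hne (by simp)
    have hksmall : k - 1 ≤ i - 2 := by
      by_contra h
      rw [stepGens_empty_large K hi2 (by omega : i - 1 ≤ k - 1)] at hne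
      exact absurd hne (by simp)
    set j := k + 1 with hjdef
    have hji : j ≤ i := by omega
    have hstep : stepIdeal K (cutGens i 2) k = Pij K i j := by
      rw [stepIdeal]
      have h := stepIdeal_eq_Pij K (i := i) (m := k - 1) (by omega)
      rw [show k - 1 + 2 = j by omega] at h
      exact h
    set k' := 2 ^ (j - 2) with hk'
    have hk'1 : 1 ≤ k' := Nat.one_le_two_pow
    have hk'r : k' ≤ (cutGens i 2).card := by
      rw [card_cutGens_two (by omega)]
      have h1 : 2 ^ (j - 2) ≤ 2 ^ (i - 2) := Nat.pow_le_pow_right (by omega) (by omega)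
      have h2 : 2 ^ (i - 2) + 2 ^ (i - 2) = 2 ^ (i - 1) := by
        rw [← two_mul, ← pow_succ']
        congr 1
        omega
      have h3 : 1 ≤ 2 ^ (i - 2) := Nat.one_le_two_pow
      omega
    obtain ⟨hj2', hji', hIk⟩ := lcmFold_eq_Pij K (i := i) hk'1 hk'r
    have hclog : Nat.clog 2 (k' + 1) = j - 1 := by
      apply le_antisymm
      · rw [Nat.clog_le_iff_le_pow one_lt_two]
        have h2 : 2 ^ (j - 2) + 2 ^ (j - 2) = 2 ^ (j - 1) := by
          rw [← two_mul, ← pow_succ']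
          congr 1
          omega
        have h3 : 1 ≤ 2 ^ (j - 2) := Nat.one_le_two_pow
        omega
      · have hlt : 2 ^ (j - 2) < k' + 1 := by omega
        have := (Nat.lt_clog_iff_pow_lt one_lt_two).mpr hlt
        omega
    refine ⟨k', hk'1, hk'r, ?_⟩
    rw [hstep, hIk, hclog, show j - 1 + 1 = j from by omega]
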